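/- arXiv:2510.07827 — 3 statements merged into one kernel-verified Lean document; each statement's English description precedes it below -/
import Mathlib

section
/- For every ξ ∈ [0, π], the complex quantity ∫_{−ξ}^{ξ} 1 dz + ∫_{ξ}^{π} exp(i(ξ − z)) dz + ∫_{−π}^{−ξ} exp(−i(ξ + z)) dz equals the real number 2ξ + 2 sin(ξ). Consequently the normalized beamforming gain of a DMA with angular weight fill ξ, obtained by averaging over channel phases uniformly distributed on the unit circle when phases outside the feasible range are mapped to the nearest endpoint, is W_fill(ξ) = |(1/(2π))(2 sin(ξ) + 2ξ)|². -/
/-! Both clipped integrands are of the form `exp (i (c - z))`, whose primitive is `i exp (i (c - z))`.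
The two boundary terms at `±π` equal `-i` and `i` and cancel, the terms at `±ξ` contribute
`i (e^{-iξ} - e^{iξ}) = 2 sin ξ`, and the matched range contributes its length `2ξ`. -/

open Complex intervalIntegral

theorem integral_exp_I_mul_sub (a b c : ℝ) :
    ∫ z in a..b, cexp (I * ((c - z : ℝ) : ℂ)) = I * (cexp (I * (c - b)) - cexp (I * (c - a))) := by
  rw [integral_comp_sub_left (fun x : ℝ => cexp (I * x)), integral_exp_mul_complex I_ne_zero,
    div_I]
  push_cast
  ring

theorem integral_exp_neg_I_mul_add (a b c : ℝ) :
    ∫ z in a..b, cexp (-I * ((c + z : ℝ) : ℂ)) = I * (cexp (I * (-c - b)) - cexp (I * (-c - a))) := by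
  have h (z : ℝ) : -I * ((c + z : ℝ) : ℂ) = I * ((-c - z : ℝ) : ℂ) := by push_cast; ring
  simp_rw [h]
  exact_mod_cast integral_exp_I_mul_sub a b (-c)

theorem weightFill_integral_eq (ξ : ℝ) :
    (∫ _ in (-ξ)..ξ, (1 : ℂ)) +
        (∫ z in ξ..Real.pi, cexp (I * ((ξ - z : ℝ) : ℂ))) +
        (∫ z in (-Real.pi)..(-ξ), cexp (-I * ((ξ + z : ℝ) : ℂ))) =
      ((2 * ξ + 2 * Real.sin ξ : ℝ) : ℂ) := by
  have hπ : cexp (I * (ξ - Real.pi)) = -cexp (ξ * I) := by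
    rw [show I * (ξ - Real.pi) = ξ * I - Real.pi * I by ring, exp_sub, exp_pi_mul_I]; ring
  have hπ' : cexp (I * (-ξ - -Real.pi)) = -cexp (-ξ * I) := by
    rw [show I * (-ξ - -Real.pi) = -ξ * I + Real.pi * I by ring, exp_add, exp_pi_mul_I]; ring
  rw [integral_exp_I_mul_sub, integral_exp_neg_I_mul_add, integral_const]
  push_cast
  rw [hπ, hπ', two_sin]
  simp only [sub_self, mul_zero, exp_zero, real_smul, mul_one]
  push_cast
  ring

theorem stmt9_general (ξ : ℝ) :
    ((∫ z in (-ξ)..ξ, (1 : ℂ)) +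
        (∫ z in ξ..Real.pi, Complex.exp (Complex.I * ((ξ - z : ℝ) : ℂ))) +
        (∫ z in (-Real.pi)..(-ξ), Complex.exp (-Complex.I * ((ξ + z : ℝ) : ℂ))) =
      ((2 * ξ + 2 * Real.sin ξ : ℝ) : ℂ)) ∧
    ‖(((1 / (2 * Real.pi) : ℝ) : ℂ) *
        ((∫ z in (-ξ)..ξ, (1 : ℂ)) +
          (∫ z in ξ..Real.pi, Complex.exp (Complex.I * ((ξ - z : ℝ) : ℂ))) +
          (∫ z in (-Real.pi)..(-ξ), Complex.exp (-Complex.I * ((ξ + z : ℝ) : ℂ)))))‖ ^ 2 =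
      ((1 / (2 * Real.pi)) * (2 * Real.sin ξ + 2 * ξ)) ^ 2 := by
  refine ⟨weightFill_integral_eq ξ, ?_⟩
  rw [weightFill_integral_eq, ← ofReal_mul, norm_real, Real.norm_eq_abs, sq_abs, add_comm (2 * ξ)]

/-- For `ξ ∈ [0, π]`, the averaged weight-fill quantity
`∫_{-ξ}^{ξ} 1 dz + ∫_{ξ}^{π} exp (i (ξ - z)) dz + ∫_{-π}^{-ξ} exp (-i (ξ + z)) dz`
equals the real number `2ξ + 2 sin ξ`; consequently the normalized beamforming gain is
`W_fill(ξ) = |(1/(2π)) (2 sin ξ + 2 ξ)|²`. -/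
theorem stmt9 (ξ : ℝ) (hξ : ξ ∈ Set.Icc 0 Real.pi) :
    ((∫ z in (-ξ)..ξ, (1 : ℂ)) +
        (∫ z in ξ..Real.pi, Complex.exp (Complex.I * ((ξ - z : ℝ) : ℂ))) +
        (∫ z in (-Real.pi)..(-ξ), Complex.exp (-Complex.I * ((ξ + z : ℝ) : ℂ))) =
      ((2 * ξ + 2 * Real.sin ξ : ℝ) : ℂ)) ∧
    ‖(((1 / (2 * Real.pi) : ℝ) : ℂ) *
        ((∫ z in (-ξ)..ξ, (1 : ℂ)) +
          (∫ z in ξ..Real.pi, Complex.exp (Complex.I * ((ξ - z : ℝ) : ℂ))) +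
          (∫ z in (-Real.pi)..(-ξ), Complex.exp (-Complex.I * ((ξ + z : ℝ) : ℂ)))))‖ ^ 2 =
      ((1 / (2 * Real.pi)) * (2 * Real.sin ξ + 2 * ξ)) ^ 2 :=
  stmt9_general ξ
end

section
/- Let a > 0 be a real number and N a positive integer. Then (∑_{n=1}^{N} e^{−a(n−1)})² / ( N · ∑_{n=1}^{N} e^{−2a(n−1)} ) = tanh(Na/2) / ( N · tanh(a/2) ). That is, the waveguide-attenuation penalty on the ideal matched-filter DMA beamforming gain, given by the normalized correlation (1/N)·|1ᵀ h_att|²/‖h_att‖² of the exponential leakage taper h_att = (1, e^{−a}, …, e^{−a(N−1)}) with the all-ones vector, equals tanh(Na/2)/(N tanh(a/2)). -/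
lemma tanh_aux (t : ℝ) :
    Real.tanh t = (1 - Real.exp (-(2*t))) / (1 + Real.exp (-(2*t))) := by
  rw [Real.tanh_eq_sinh_div_cosh, Real.sinh_eq, Real.cosh_eq]
  have h1 : Real.exp t > 0 := Real.exp_pos t
  have h2 : Real.exp (-t) > 0 := Real.exp_pos (-t)
  have hd : Real.exp t + Real.exp (-t) > 0 := by linarith
  have he : Real.exp (-(2*t)) = Real.exp (-t) * Real.exp (-t) := by
    rw [← Real.exp_add]; ring_nf
  have he2 : Real.exp t * Real.exp (-t) = 1 := by
    rw [← Real.exp_add]; simp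
  rw [he]
  field_simp
  nlinarith [he2]

/-- For `a > 0` and a positive integer `N`, the waveguide-attenuation penalty satisfies
`(∑_{n=1}^{N} e^{-a(n-1)})² / (N ∑_{n=1}^{N} e^{-2a(n-1)}) = tanh (N a / 2) / (N tanh (a / 2))`. -/
theorem stmt11 (a : ℝ) (ha : 0 < a) (N : ℕ) (hN : 0 < N) :
    (∑ n ∈ Finset.range N, Real.exp (-a * n)) ^ 2 /
        ((N : ℝ) * ∑ n ∈ Finset.range N, Real.exp (-2 * a * n)) =
      Real.tanh ((N : ℝ) * a / 2) / ((N : ℝ) * Real.tanh (a / 2)) := by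
  set x := Real.exp (-a) with hx
  have hx0 : 0 < x := Real.exp_pos _
  have hx1 : x < 1 := by
    rw [hx]; exact Real.exp_lt_one_iff.mpr (by linarith)
  set y := x ^ N with hy
  have hy0 : 0 < y := pow_pos hx0 N
  have hy1 : y < 1 := pow_lt_one₀ (le_of_lt hx0) hx1 hN.ne'
  have hs1 : ∑ n ∈ Finset.range N, Real.exp (-a * n) = (y - 1) / (x - 1) := by
    have : ∀ n : ℕ, Real.exp (-a * n) = x ^ n := by
      intro n; rw [hx, ← Real.exp_nat_mul]; ring_nf
    simp_rw [this]
    rw [geom_sum_eq (by linarith)]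
  have hs2 : ∑ n ∈ Finset.range N, Real.exp (-2 * a * n) = (y^2 - 1) / (x^2 - 1) := by
    have : ∀ n : ℕ, Real.exp (-2 * a * n) = (x^2) ^ n := by
      intro n
      rw [hx, ← Real.exp_nat_mul, ← Real.exp_nat_mul]
      · ring_nf
    simp_rw [this]
    rw [geom_sum_eq (by nlinarith), ← pow_mul, mul_comm 2 N, pow_mul, ← hy]
  have ht1 : Real.tanh ((N : ℝ) * a / 2) = (1 - y) / (1 + y) := by
    rw [tanh_aux]
    congr 2 <;>
    · rw [hy, hx, ← Real.exp_nat_mul]; ring_nf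
  have ht2 : Real.tanh (a / 2) = (1 - x) / (1 + x) := by
    rw [tanh_aux]; congr 2 <;> · rw [hx]; ring_nf
  rw [hs1, hs2, ht1, ht2]
  have hN0 : (N : ℝ) ≠ 0 := Nat.cast_ne_zero.mpr hN.ne'
  have h1 : x - 1 ≠ 0 := by linarith
  have h2 : x + 1 ≠ 0 := by linarith
  have h3 : y - 1 ≠ 0 := by linarith
  have h4 : y + 1 ≠ 0 := by linarith
  have h5 : x^2 - 1 ≠ 0 := by nlinarith
  have h6 : y^2 - 1 ≠ 0 := by nlinarith
  have h7 : (1:ℝ) + y ≠ 0 := by linarith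
  have h8 : (1:ℝ) + x ≠ 0 := by linarith
  have h9 : (1:ℝ) - x ≠ 0 := by linarith
  have h10 : (1:ℝ) - y ≠ 0 := by linarith
  clear_value y
  clear hy
  field_simp
  ring
end

section
/- The function A_leak : (0, 1) → ℝ defined by A_leak(Λ) = (4/ln(1 − Λ)) · tanh( ln(1 − Λ)/4 ) is strictly decreasing on (0, 1), takes values in (0, 1), and satisfies A_leak(Λ) → 1 as Λ → 0⁺. Hence radiating a larger fraction of the input power strictly increases the waveguide-attenuation loss in DMA beamforming gain, and the loss vanishes in the limit of small fractional radiated power. -/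
/-!
With `t = -ln(1 - Λ)/4`, which increases from `0` to `∞` on `(0, 1)`, and since `tanh` is odd,
`A_leak(Λ) = tanh t / t`. The function `tanh t / t` has derivative
`(2t - sinh 2t) / (2 t² cosh² t) < 0` for `t > 0` and tends to `tanh' 0 = 1` as `t → 0⁺`;
monotonicity then squeezes it into `(0, 1)`.
-/

open Real Set Filter Topology

namespace Real

theorem hasDerivAt_tanh (x : ℝ) : HasDerivAt tanh (cosh x ^ 2)⁻¹ x := by
  have h : HasDerivAt (fun y => sinh y / cosh y) _ x :=
    (hasDerivAt_sinh x).div (hasDerivAt_cosh x) (cosh_pos x).ne'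
  rw [show tanh = fun y => sinh y / cosh y from funext tanh_eq_sinh_div_cosh]
  refine h.congr_deriv ?_
  rw [← sq, ← sq, cosh_sq_sub_sinh_sq, one_div]

theorem continuous_tanh : Continuous tanh :=
  continuous_iff_continuousAt.2 fun x => (hasDerivAt_tanh x).continuousAt

theorem tanh_pos {x : ℝ} (hx : 0 < x) : 0 < tanh x := by
  rw [tanh_eq_sinh_div_cosh]
  exact div_pos (sinh_pos_iff.2 hx) (cosh_pos x)

theorem strictAntiOn_tanh_div_self : StrictAntiOn (fun t => tanh t / t) (Ioi 0) := by
  refine strictAntiOn_of_deriv_neg (convex_Ioi 0)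
    (continuous_tanh.continuousOn.div continuousOn_id fun t ht => ht.ne') fun t ht => ?_
  rw [interior_Ioi, mem_Ioi] at ht
  have hc := cosh_pos t
  have hsinh : 2 * t < sinh (2 * t) := self_lt_sinh_iff.2 (by linarith)
  rw [sinh_two_mul] at hsinh
  have hd : HasDerivAt (fun t => tanh t / t) _ t :=
    (hasDerivAt_tanh t).div (hasDerivAt_id t) ht.ne'
  rw [hd.deriv, tanh_eq_sinh_div_cosh]
  apply div_neg_of_neg_of_pos _ (pow_pos ht 2)
  field_simp
  nlinarith

theorem tendsto_tanh_div_self : Tendsto (fun t => tanh t / t) (𝓝[>] 0) (𝓝 1) := by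
  simpa [tanh_zero, div_eq_inv_mul] using (hasDerivAt_tanh 0).tendsto_slope_zero_right

theorem tanh_div_self_lt_one {t : ℝ} (ht : 0 < t) : tanh t / t < 1 := by
  have hhalf : 0 < t / 2 := half_pos ht
  have hle : tanh (t / 2) / (t / 2) ≤ 1 := by
    refine ge_of_tendsto tendsto_tanh_div_self ?_
    filter_upwards [Ioc_mem_nhdsGT hhalf] with s hs
    exact strictAntiOn_tanh_div_self.antitoneOn hs.1 hhalf hs.2
  exact (strictAntiOn_tanh_div_self hhalf ht (half_lt_self ht)).trans_le hle

end Real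

theorem div_mul_tanh_div (c L : ℝ) : c / L * tanh (L / c) = tanh (-L / c) / (-L / c) := by
  rw [neg_div, tanh_neg, neg_div_neg_eq, div_div_eq_mul_div]
  ring

theorem neg_log_one_sub_div_pos {c x : ℝ} (hc : 0 < c) (hx : x ∈ Ioo 0 1) :
    0 < -log (1 - x) / c :=
  div_pos (neg_pos.2 (log_neg (by linarith [hx.2]) (by linarith [hx.1]))) hc

theorem strictMonoOn_neg_log_one_sub_div {c : ℝ} (hc : 0 < c) :
    StrictMonoOn (fun x => -log (1 - x) / c) (Iio 1) := fun x _ y hy hxy => by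
  have := log_lt_log (sub_pos.2 hy) (by linarith : 1 - y < 1 - x)
  dsimp only
  gcongr

theorem tendsto_neg_log_one_sub_div {c : ℝ} (hc : 0 < c) :
    Tendsto (fun x => -log (1 - x) / c) (𝓝[>] 0) (𝓝[>] 0) := by
  refine tendsto_nhdsWithin_of_tendsto_nhds_of_eventually_within _ ?_ ?_
  · have : ContinuousAt (fun x => -log (1 - x) / c) 0 :=
      ((continuousAt_const.sub continuousAt_id).log (by simp)).neg.div_const c
    simpa using this.tendsto.mono_left nhdsWithin_le_nhds
  · filter_upwards [Ioo_mem_nhdsGT one_pos] with x hx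
    exact neg_log_one_sub_div_pos hc hx

/-- The function `A_leak(Λ) = (4/ln(1-Λ)) tanh (ln(1-Λ)/4)` is strictly decreasing on `(0,1)`,
takes values in `(0,1)`, and tends to `1` as `Λ → 0⁺`. -/
theorem stmt14 :
    StrictAntiOn (fun Λ : ℝ => (4 / Real.log (1 - Λ)) * Real.tanh (Real.log (1 - Λ) / 4))
      (Set.Ioo 0 1) ∧
    (∀ Λ ∈ Set.Ioo (0 : ℝ) 1,
      (4 / Real.log (1 - Λ)) * Real.tanh (Real.log (1 - Λ) / 4) ∈ Set.Ioo (0 : ℝ) 1) ∧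
    Filter.Tendsto (fun Λ : ℝ => (4 / Real.log (1 - Λ)) * Real.tanh (Real.log (1 - Λ) / 4))
      (nhdsWithin 0 (Set.Ioi 0)) (nhds 1) := by
  have hpos : MapsTo (fun x => -log (1 - x) / 4) (Ioo 0 1) (Ioi 0) := fun _ hx =>
    neg_log_one_sub_div_pos four_pos hx
  simp only [div_mul_tanh_div]
  refine ⟨?_, fun Λ hΛ => ⟨div_pos (tanh_pos (hpos hΛ)) (hpos hΛ), tanh_div_self_lt_one (hpos hΛ)⟩,
    tendsto_tanh_div_self.comp (tendsto_neg_log_one_sub_div four_pos)⟩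
  exact strictAntiOn_tanh_div_self.comp_strictMonoOn
    ((strictMonoOn_neg_log_one_sub_div four_pos).mono fun _ hx => hx.2) hpos
end
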